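/- Let K be an algebraic closure of F_2, let F2(X,Y,Z) = (X+Y)^4 + X^2*Y^2 + X*Y*Z*(X+Y+Z) + Z^2*(X+Y+Z)^2 and let Q(X,Y,Z) = X^3*Y + Y^3*Z + Z^3*X (the Klein quartic), both regarded as homogeneous quartics over K. Then there exist an invertible 3-by-3 matrix A over K and a nonzero scalar c in K such that the polynomial obtained from Q by the linear substitution (X,Y,Z) -> A*(X,Y,Z) is equal to c*F2; that is, the curve C2 is a twist of the reduction modulo 2 of the Klein quartic. -/

import Mathlib

open MvPolynomial

/-- The plane quartic `F2` over the algebraic closure `K` of `𝔽₂`. -/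
noncomputable def F2K : MvPolynomial (Fin 3) (AlgebraicClosure (ZMod 2)) :=
  (X 0 + X 1) ^ 4 + (X 0) ^ 2 * (X 1) ^ 2
    + X 0 * X 1 * X 2 * (X 0 + X 1 + X 2)
    + (X 2) ^ 2 * (X 0 + X 1 + X 2) ^ 2

/-- The Klein quartic over the algebraic closure `K` of `𝔽₂`. -/
noncomputable def KleinK : MvPolynomial (Fin 3) (AlgebraicClosure (ZMod 2)) :=
  (X 0) ^ 3 * X 1 + (X 1) ^ 3 * X 2 + (X 2) ^ 3 * X 0

/-!
Let `a ∈ 𝔽₈` be a root of `t³ + t + 1`, so that its Frobenius conjugates are `a, a², a⁴`, and let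
`ℓ = x + a y + a² z`. The rows of `kleinTwistMatrix a` are `ℓ, σ² ℓ, σ ℓ` for the Frobenius `σ`, hence
`Q(ℓ, σ² ℓ, σ ℓ) = ℓ³ σ²ℓ + σ(ℓ³ σ²ℓ) + σ²(ℓ³ σ²ℓ)` is a trace from `𝔽₈` to `𝔽₂`, so it has
coefficients in `𝔽₂`; computing it gives `F2`. The Moore matrix of the basis `1, a, a²` is invertible.
-/

theorem IsAlgClosed.exists_pow_three_eq_add_one (K : Type*) [Field K] [IsAlgClosed K] :
    ∃ a : K, a ^ 3 = a + 1 := by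
  have hdeg : (Polynomial.X ^ 3 - Polynomial.X - 1 : Polynomial K).degree = 3 := by
    compute_degree!
  obtain ⟨a, ha⟩ := IsAlgClosed.exists_root _ (by rw [hdeg]; decide)
  exact ⟨a, by simp only [Polynomial.IsRoot, Polynomial.eval_sub, Polynomial.eval_pow,
    Polynomial.eval_X, Polynomial.eval_one] at ha; linear_combination ha⟩

section CharTwo

variable {R : Type*} [CommRing R] [CharP R 2] {a : R}

def kleinTwistMatrix (a : R) : Matrix (Fin 3) (Fin 3) R :=
  !![1, a, a ^ 2; 1, a ^ 4, a; 1, a ^ 2, a ^ 4]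

theorem det_kleinTwistMatrix (ha : a ^ 3 = a + 1) : (kleinTwistMatrix a).det = 1 := by
  rw [kleinTwistMatrix, Matrix.det_fin_three]
  simp only [Matrix.of_apply, Matrix.cons_val', Matrix.cons_val_zero, Matrix.cons_val_fin_one,
    Matrix.cons_val_one, Matrix.cons_val, one_mul, mul_one]
  grind

theorem klein_twist_eq (ha : a ^ 3 = a + 1) (x y z : R) :
    (x + a * y + a ^ 2 * z) ^ 3 * (x + a ^ 4 * y + a * z)
      + (x + a ^ 4 * y + a * z) ^ 3 * (x + a ^ 2 * y + a ^ 4 * z)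
      + (x + a ^ 2 * y + a ^ 4 * z) ^ 3 * (x + a * y + a ^ 2 * z)
    = (x + y) ^ 4 + x ^ 2 * y ^ 2 + x * y * z * (x + y + z) + z ^ 2 * (x + y + z) ^ 2 := by
  grind

end CharTwo

theorem stmt_18 :
    ∃ (A : Matrix (Fin 3) (Fin 3) (AlgebraicClosure (ZMod 2)))
      (c : AlgebraicClosure (ZMod 2)),
      IsUnit A.det ∧ c ≠ 0 ∧
      (aeval fun i => ∑ j, C (A i j) * X j :
          MvPolynomial (Fin 3) (AlgebraicClosure (ZMod 2)) →ₐ[AlgebraicClosure (ZMod 2)]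
          MvPolynomial (Fin 3) (AlgebraicClosure (ZMod 2))) KleinK = C c * F2K := by
  obtain ⟨a, ha⟩ := IsAlgClosed.exists_pow_three_eq_add_one (AlgebraicClosure (ZMod 2))
  refine ⟨kleinTwistMatrix a, 1, by simp [det_kleinTwistMatrix ha], one_ne_zero, ?_⟩
  have hCa : C a ^ 3 = (C a + 1 : MvPolynomial (Fin 3) (AlgebraicClosure (ZMod 2))) := by
    rw [← map_pow, ha, map_add, map_one]
  simp only [KleinK, F2K, kleinTwistMatrix, aeval_eq_bind₁, map_add, map_mul, map_pow, bind₁_X_right,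
    Fin.sum_univ_three, Matrix.of_apply, Matrix.cons_val', Matrix.cons_val_fin_one, Matrix.cons_val_zero,
    Matrix.cons_val_one, Matrix.cons_val, C_1, one_mul]
  exact klein_twist_eq hCa _ _ _
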